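/- For all decorated trees σ, τ ∈ 𝔗, every a = (𝔱, m) ∈ 𝔇₊ and every i ∈ {0,…,d}: ↑^i (σ ↷̂^a τ) = (↑^i σ) ↷̂^a τ + σ ↷̂^a (↑^i τ) − σ ↷̂^{a − e_i} τ in 𝒯, where a − e_i := (𝔱, m − e_i) and the last term is set to zero if m_i = 0. -/

import Mathlib

/-!
At the root, raising the root decoration `k` commutes with deformed grafting up to Pascal's rule
`binom(k + e_i, ℓ) = binom(k, ℓ) + binom(k, ℓ - e_i)`, and the second part, after the shift
`ℓ ↦ ℓ + e_i`, is exactly deformed grafting along `a - e_i`. Away from the root, `↑^i` and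
`σ ↷̂^a ·` act on the list of branches as derivations, one branch at a time, and the commutator of
two such derivations is the derivation of the commutator of the operators on single trees; so the
identity propagates from the subtrees by induction. As both operators return normal forms (sorted
branch lists), they must also be shown to be insensitive to normalising their argument.
-/

noncomputable section

inductive DT (d : ℕ) (Lp Lm : Type) : Type
| node : (Fin (d+1) → ℕ) → Lm → List ((Lp × (Fin (d+1) → ℕ)) × DT d Lp Lm) → DT d Lp Lm

variable {d : ℕ} {Lp Lm : Type}

noncomputable instance DT.linOrd : LinearOrder ((Lp × (Fin (d+1) → ℕ)) × DT d Lp Lm) :=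
  letI : DecidableRel (@WellOrderingRel ((Lp × (Fin (d+1) → ℕ)) × DT d Lp Lm)) := Classical.decRel _
  linearOrderOfSTO WellOrderingRel

instance [Zero Lm] : Inhabited (DT d Lp Lm) := ⟨.node 0 0 []⟩

/-- normal form: recursively sort the lists of branches -/
def DT.nf : DT d Lp Lm → DT d Lp Lm
| .node k l cs => .node k l
    ((cs.attach.map (fun x => (x.1.1, DT.nf x.1.2))).mergeSort (fun a b => a ≤ b))
decreasing_by
  obtain ⟨⟨e, t⟩, hx⟩ := x
  have h1 := List.sizeOf_lt_of_mem hx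
  simp_all [DT.node.sizeOf_spec]
  omega

noncomputable instance : DecidableEq (DT d Lp Lm) := Classical.decEq _

/-- multi-indices -/
abbrev MIdx (d : ℕ) : Type := Fin (d+1) → ℕ

/-- decorated trees without noise label at the root (elements of `𝔗₊`):
a root decoration together with a list of planted trees -/
abbrev DTP (d : ℕ) (Lp Lm : Type) : Type :=
  MIdx d × List ((Lp × MIdx d) × DT d Lp Lm)

/-- binomial coefficient of multi-indices -/
def mbinom (k ℓ : MIdx d) : ℕ := ∏ j, (k j).choose (ℓ j)

/-- factorial of a multi-index -/
def mfact (k : MIdx d) : ℕ := ∏ j, (k j).factorial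

/-- elements of the free vector space `𝒯` spanned by decorated trees -/
abbrev FS (d : ℕ) (Lp Lm : Type) : Type := DT d Lp Lm →₀ ℝ

/-- elements of the free vector space `𝒯₊` -/
abbrev FSP (d : ℕ) (Lp Lm : Type) : Type := DTP d Lp Lm →₀ ℝ

/-- linear extension of a map defined on basis elements -/
def bindF {α β : Type} [AddCommMonoid β] [Module ℝ β] (x : α →₀ ℝ) (f : α → β) : β :=
  x.sum (fun a c => c • f a)

/-- normal form on `𝔗₊` -/
def nfP (σ : DTP d Lp Lm) : DTP d Lp Lm :=
  (σ.1, ((σ.2.map (fun c => (c.1, c.2.nf))).mergeSort (fun a b => a ≤ b)))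

mutual
/-- the deformed grafting product `σ ↷̂^a τ` -/
def graftD (σ : DT d Lp Lm) (a : Lp × MIdx d) : DT d Lp Lm → FS d Lp Lm
| .node k l cs =>
    (∑ ℓ ∈ Finset.Iic (k ⊓ a.2), (mbinom k ℓ : ℝ) •
      Finsupp.single (DT.nf (.node (k - ℓ) l (((a.1, a.2 - ℓ), σ) :: cs))) (1:ℝ)) +
    bindF (graftList σ a cs) (fun cs' => Finsupp.single (DT.nf (.node k l cs')) (1:ℝ))
termination_by τ => sizeOf τ
decreasing_by all_goals first
  | (simp_all [DT.node.sizeOf_spec]; omega)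
  | simp_all [DT.node.sizeOf_spec]

/-- grafting into one of the trees of a list of planted trees -/
def graftList (σ : DT d Lp Lm) (a : Lp × MIdx d) :
    List ((Lp × MIdx d) × DT d Lp Lm) → (List ((Lp × MIdx d) × DT d Lp Lm) →₀ ℝ)
| [] => 0
| c :: cs =>
    bindF (graftD σ a c.2) (fun t => Finsupp.single ((c.1, t) :: cs) (1:ℝ)) +
    bindF (graftList σ a cs) (fun cs' => Finsupp.single (c :: cs') (1:ℝ))
termination_by cs => sizeOf cs
decreasing_by
  all_goals (try obtain ⟨e, t⟩ := c)
  all_goals simp_all [DT.node.sizeOf_spec]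
  all_goals omega
end

mutual
/-- the operator `↑^i` adding `e_i` to the decoration of one node, summed over all nodes -/
def upE (i : Fin (d+1)) : DT d Lp Lm → FS d Lp Lm
| .node k l cs =>
    Finsupp.single (DT.nf (.node (k + Pi.single i 1) l cs)) (1:ℝ) +
    bindF (upEList i cs) (fun cs' => Finsupp.single (DT.nf (.node k l cs')) (1:ℝ))
termination_by τ => sizeOf τ
decreasing_by all_goals first
  | (simp_all [DT.node.sizeOf_spec]; omega)
  | simp_all [DT.node.sizeOf_spec]

def upEList (i : Fin (d+1)) :
    List ((Lp × MIdx d) × DT d Lp Lm) → (List ((Lp × MIdx d) × DT d Lp Lm) →₀ ℝ)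
| [] => 0
| c :: cs =>
    bindF (upE i c.2) (fun t => Finsupp.single ((c.1, t) :: cs) (1:ℝ)) +
    bindF (upEList i cs) (fun cs' => Finsupp.single (c :: cs') (1:ℝ))
termination_by cs => sizeOf cs
decreasing_by
  all_goals (try obtain ⟨e, t⟩ := c)
  all_goals simp_all [DT.node.sizeOf_spec]
  all_goals omega
end

/-- symmetry factor of a decorated tree -/
def SD : DT d Lp Lm → ℝ
| .node k l cs => (mfact k : ℝ) *
    ((cs.dedup).map (fun c => ((cs.count c).factorial : ℝ))).prod *
    (cs.attach.map (fun x => SD x.1.2)).prod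
decreasing_by
  obtain ⟨⟨e, t⟩, hx⟩ := x
  have h1 := List.sizeOf_lt_of_mem hx
  simp_all [DT.node.sizeOf_spec]
  omega

/-- symmetry factor of an element of `𝔗₊` -/
def SDP (σ : DTP d Lp Lm) : ℝ :=
  (mfact σ.1 : ℝ) *
    ((σ.2.dedup).map (fun c => ((σ.2.count c).factorial : ℝ))).prod *
    (σ.2.map (fun c => SD c.2)).prod

/-- number of nodes of a decorated tree -/
def sizeDT : DT d Lp Lm → ℕ
| .node _ _ cs => 1 + (cs.attach.map (fun x => sizeDT x.1.2)).sum
decreasing_by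
  obtain ⟨⟨e, t⟩, hx⟩ := x
  have h1 := List.sizeOf_lt_of_mem hx
  simp_all [DT.node.sizeOf_spec]
  omega

/-- all ways to distribute the elements of a list into `n` ordered blocks -/
def splitsN {α : Type} (n : ℕ) : List α → List (List (List α))
| [] => [List.replicate n []]
| a :: as => (splitsN n as).flatMap
    (fun bs => (List.range n).map (fun i => bs.set i (a :: bs.getD i [])))

/-- grafting a list of planted trees at a single node carrying decoration `n`,
with the binomial deformation: returns the new node decoration together with the
newly attached planted trees -/
def rootG : List ((Lp × MIdx d) × DT d Lp Lm) → MIdx d →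
    ((MIdx d × List ((Lp × MIdx d) × DT d Lp Lm)) →₀ ℝ)
| [], n => Finsupp.single (n, []) 1
| (a, s) :: ps, n => ∑ ℓ ∈ Finset.Iic (n ⊓ a.2), (mbinom n ℓ : ℝ) •
    bindF (rootG ps (n - ℓ))
      (fun rg => Finsupp.single (rg.1, ((a.1, a.2 - ℓ), s) :: rg.2) (1:ℝ))

mutual
/-- simultaneous deformed grafting of the planted trees of `P` onto the nodes of `τ`,
together with the distribution of the monomial `X^k` over the nodes of `τ`
(the `⋆₂`-product `(X^k ∏ P) ⋆₂ τ`) -/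
def starAux (P : List ((Lp × MIdx d) × DT d Lp Lm)) (k : MIdx d) :
    DT d Lp Lm → FS d Lp Lm
| .node n l cs =>
    ((splitsN (cs.length + 1) P).map (fun bs =>
      ∑ kr ∈ Finset.Iic k,
        bindF (rootG (bs.headD []) n) (fun rg =>
          bindF (starList bs.tail (k - kr) cs) (fun cs' =>
            Finsupp.single (DT.nf (.node (rg.1 + kr) l (rg.2 ++ cs'))) (1:ℝ))))).sum
termination_by τ => sizeOf τ
decreasing_by all_goals first
  | (simp_all [DT.node.sizeOf_spec]; omega)
  | simp_all [DT.node.sizeOf_spec]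

/-- distributing blocks of planted trees and parts of a monomial into a list of branches -/
def starList : List (List ((Lp × MIdx d) × DT d Lp Lm)) → MIdx d →
    List ((Lp × MIdx d) × DT d Lp Lm) → (List ((Lp × MIdx d) × DT d Lp Lm) →₀ ℝ)
| _, k, [] => if k = 0 then Finsupp.single [] 1 else 0
| bs, k, c :: cs => ∑ k₁ ∈ Finset.Iic k,
    bindF (starAux (bs.headD []) k₁ c.2) (fun t =>
      bindF (starList bs.tail (k - k₁) cs) (fun cs' =>
        Finsupp.single ((c.1, t) :: cs') (1:ℝ)))
termination_by _ _ cs => sizeOf cs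
decreasing_by
  all_goals (try obtain ⟨e, t⟩ := c)
  all_goals simp_all [DT.node.sizeOf_spec]
  all_goals omega
end

/-- the product `σ ⋆₂ τ` for `σ ∈ 𝔗₊` and `τ ∈ 𝔗` -/
def starP (σ : DTP d Lp Lm) (τ : DT d Lp Lm) : FS d Lp Lm := starAux σ.2 σ.1 τ

/-- the product `σ ⋆₂ ρ` for `σ, ρ ∈ 𝔗₊` -/
def starPP (σ ρ : DTP d Lp Lm) : FSP d Lp Lm :=
  ((splitsN (ρ.2.length + 1) σ.2).map (fun bs =>
    ∑ kr ∈ Finset.Iic σ.1,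
      bindF (rootG (bs.headD []) ρ.1) (fun rg =>
        bindF (starList bs.tail (σ.1 - kr) ρ.2) (fun cs' =>
          Finsupp.single (nfP (rg.1 + kr, rg.2 ++ cs')) (1:ℝ))))).sum

variable [Zero Lm]

noncomputable instance : DecidableEq Lm := Classical.decEq _

mutual
/-- the insertion product `σ₁⋯σ_m ⋆₁ τ` of a forest (given as a list) into a decorated tree -/
def star1 : List (DT d Lp Lm) → DT d Lp Lm → FS d Lp Lm
| [], τ => Finsupp.single τ.nf 1
| σs@(_ :: _), .node k l cs =>
    (if l = 0 then
      ((List.range σs.length).map (fun j =>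
        ((splitsN cs.length (σs.eraseIdx j)).map (fun bs =>
          bindF (star1List bs cs) (fun cs' =>
            starP (k, cs') (σs.getD j default)))).sum)).sum
     else 0) +
    ((splitsN cs.length σs).map (fun bs =>
      bindF (star1List bs cs) (fun cs' =>
        Finsupp.single (DT.nf (.node k l cs')) (1:ℝ)))).sum
termination_by _ τ => sizeOf τ
decreasing_by all_goals first
  | (simp_all [DT.node.sizeOf_spec]; omega)
  | simp_all [DT.node.sizeOf_spec]

/-- inserting blocks of a forest into a list of branches -/
def star1List : List (List (DT d Lp Lm)) →
    List ((Lp × MIdx d) × DT d Lp Lm) → (List ((Lp × MIdx d) × DT d Lp Lm) →₀ ℝ)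
| _, [] => Finsupp.single [] 1
| bs, c :: cs => bindF (star1 (bs.headD []) c.2) (fun t =>
    bindF (star1List bs.tail cs) (fun cs' => Finsupp.single ((c.1, t) :: cs') (1:ℝ)))
termination_by _ cs => sizeOf cs
decreasing_by
  all_goals (try obtain ⟨e, t⟩ := c)
  all_goals simp_all [DT.node.sizeOf_spec]
  all_goals omega
end

/-- the product `σ₁⋯σ_m ⋆_∘ ρ` for `ρ ∈ 𝔗₊` (insertion outside the root) -/
def starO (σs : List (DT d Lp Lm)) (ρ : DTP d Lp Lm) : FSP d Lp Lm :=
  ((splitsN ρ.2.length σs).map (fun bs =>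
    bindF (star1List bs ρ.2) (fun cs' => Finsupp.single (nfP (ρ.1, cs')) (1:ℝ)))).sum

/-- symmetry factor of a forest of decorated trees -/
def SF (f : Multiset (DT d Lp Lm)) : ℝ :=
  ∏ t ∈ f.toFinset, (((f.count t).factorial : ℝ) * (SD t) ^ (f.count t))

/-- value of a finitely supported map `β : 𝔗 → ℝ`, extended multiplicatively, on a forest -/
def betaF (β : DT d Lp Lm →₀ ℝ) (f : Multiset (DT d Lp Lm)) : ℝ := (f.map β).prod

/-- a finite set of forests containing all forests built from trees in `s` that can
contribute to an insertion into a tree with at most `N` nodes -/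
def forestsLe (N : ℕ) (s : Finset (DT d Lp Lm)) : Finset (Multiset (DT d Lp Lm)) :=
  ((N • s.val).powerset).toFinset

/-- the map `M*_β τ := Σ_{σ̄} (β(σ̄)/S(σ̄)) σ̄ ⋆₁ τ`, the sum running over all forests
(only those consisting of trees in the support of `β`, with at most `sizeDT τ` trees,
contribute) -/
def Mstar (β : DT d Lp Lm →₀ ℝ) (τ : DT d Lp Lm) : FS d Lp Lm :=
  ∑ f ∈ forestsLe (sizeDT τ) β.support, (betaF β f / SF f) • star1 f.toList τ

/-- the map `M̂*_β σ := Σ_{σ̄} (β(σ̄)/S(σ̄)) σ̄ ⋆_∘ σ` on `𝒯₊` -/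
def Mhat (β : DT d Lp Lm →₀ ℝ) (ρ : DTP d Lp Lm) : FSP d Lp Lm :=
  ∑ f ∈ forestsLe (1 + (ρ.2.map (fun c => sizeDT c.2)).sum) β.support,
    (betaF β f / SF f) • starO f.toList ρ

/-- the polynomial ring `ℝ[Z_a : a ∈ 𝔇₊]` -/
abbrev RP (d : ℕ) (Lp : Type) : Type := MvPolynomial (Lp × MIdx d) ℝ

/-- the derivation `∂^{e_i} = Σ_a Z_{a+e_i} D_a` (only finitely many terms act
nontrivially on a given polynomial) -/
def partialE (i : Fin (d+1)) (P : RP d Lp) : RP d Lp :=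
  ∑ a ∈ P.vars, MvPolynomial.X (a.1, a.2 + Pi.single i 1) * MvPolynomial.pderiv a P

/-- `∂^k := ∏_i (∂^{e_i})^{k_i}` -/
def partialK (k : MIdx d) (P : RP d Lp) : RP d Lp :=
  (List.finRange (d+1)).foldl (fun Q j => (partialE j)^[k j] Q) P

/-- `D_{a_1} ⋯ D_{a_n}` applied along the edge decorations of a list of branches -/
def pderivFold (cs : List ((Lp × MIdx d) × DT d Lp Lm)) (P : RP d Lp) : RP d Lp :=
  cs.foldr (fun c Q => MvPolynomial.pderiv c.1 Q) P

/-- the elementary differentials `F_𝔱(τ)` associated with a family of nonlinearities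
`(F_𝔱^𝔩)`: `F_𝔱(X^k Ξ_𝔩 ∏_j I_{a_j}(τ_j)) = (∂^k D_{a_1}⋯D_{a_n} F_𝔱^𝔩) ∏_j F_{𝔱_j}(τ_j)` -/
def Felem (Fnl : Lp → Lm → RP d Lp) : Lp → DT d Lp Lm → RP d Lp
| t, .node k l cs =>
    partialK k (pderivFold cs (Fnl t l)) *
      (cs.attach.map (fun x => Felem Fnl x.1.1.1 x.1.2)).prod
decreasing_by
  obtain ⟨⟨e, t'⟩, hx⟩ := x
  have h1 := List.sizeOf_lt_of_mem hx
  simp_all [DT.node.sizeOf_spec]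
  omega

/-- linear extension of the elementary differentials to `𝒯` -/
def FelemL (Fnl : Lp → Lm → RP d Lp) (t : Lp) (x : FS d Lp Lm) : RP d Lp :=
  bindF x (fun τ => Felem Fnl t τ)

section BindF

variable {α γ β : Type} [AddCommGroup β] [Module ℝ β]

theorem bindF_eq_linearCombination (x : α →₀ ℝ) (f : α → β) :
    bindF x f = Finsupp.linearCombination ℝ f x := rfl

@[simp] theorem bindF_zero_left (f : α → β) : bindF (0 : α →₀ ℝ) f = 0 := by
  simp [bindF_eq_linearCombination]

theorem bindF_add_left (x y : α →₀ ℝ) (f : α → β) :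
    bindF (x + y) f = bindF x f + bindF y f := by
  simp [bindF_eq_linearCombination]

theorem bindF_sub_left (x y : α →₀ ℝ) (f : α → β) :
    bindF (x - y) f = bindF x f - bindF y f := by
  simp [bindF_eq_linearCombination]

theorem bindF_smul_left (c : ℝ) (x : α →₀ ℝ) (f : α → β) :
    bindF (c • x) f = c • bindF x f := by
  simp [bindF_eq_linearCombination]

theorem bindF_sum_left {ι : Type} (s : Finset ι) (x : ι → α →₀ ℝ) (f : α → β) :
    bindF (∑ j ∈ s, x j) f = ∑ j ∈ s, bindF (x j) f := by
  simp [bindF_eq_linearCombination]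

@[simp] theorem bindF_single (a : α) (c : ℝ) (f : α → β) :
    bindF (Finsupp.single a c) f = c • f a := by
  simp [bindF_eq_linearCombination]

theorem bindF_zero_right (x : α →₀ ℝ) : bindF x (fun _ => (0 : β)) = 0 := by
  simp [bindF]

theorem bindF_add_right (x : α →₀ ℝ) (f g : α → β) :
    bindF x (fun a => f a + g a) = bindF x f + bindF x g := by
  simp [bindF, Finsupp.sum_add, smul_add]

theorem bindF_smul_right (x : α →₀ ℝ) (c : ℝ) (f : α → β) :
    bindF x (fun a => c • f a) = c • bindF x f := by
  simp only [bindF, Finsupp.smul_sum, smul_comm c]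

theorem bindF_sum_right {ι : Type} (x : α →₀ ℝ) (s : Finset ι) (f : ι → α → β) :
    bindF x (fun a => ∑ j ∈ s, f j a) = ∑ j ∈ s, bindF x (f j) := by
  simp only [bindF, Finsupp.sum, Finset.smul_sum]
  exact Finset.sum_comm

theorem bindF_congr {x : α →₀ ℝ} {f g : α → β} (h : ∀ a, f a = g a) :
    bindF x f = bindF x g :=
  congrArg _ (funext h)

theorem bindF_bindF (x : α →₀ ℝ) (g : α → γ →₀ ℝ) (f : γ → β) :
    bindF (bindF x g) f = bindF x (fun a => bindF (g a) f) :=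
  Finsupp.linearCombination_linearCombination (R := ℝ) f g x

theorem bindF_comm (x : α →₀ ℝ) (y : γ →₀ ℝ) (f : α → γ → β) :
    bindF x (fun a => bindF y (f a)) = bindF y (fun c => bindF x (fun a => f a c)) := by
  simp only [bindF, Finsupp.smul_sum]
  rw [Finsupp.sum_comm]
  exact Finsupp.sum_congr fun _ _ => Finsupp.sum_congr fun _ _ => smul_comm _ _ _

theorem bindF_mapDomain (h : α → γ) (x : α →₀ ℝ) (f : γ → β) :
    bindF (Finsupp.mapDomain h x) f = bindF x (fun a => f (h a)) :=
  Finsupp.linearCombination_mapDomain ℝ _ _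

theorem mapDomain_eq_bindF (h : α → γ) (x : α →₀ ℝ) :
    Finsupp.mapDomain h x = bindF x (fun a => Finsupp.single (h a) 1) := by
  simp [bindF, Finsupp.mapDomain]

end BindF

section MultiIndex

variable {d : ℕ}

theorem mbinom_eq_zero_of_not_le {k ℓ : MIdx d} (h : ¬ ℓ ≤ k) : mbinom k ℓ = 0 := by
  simp only [Pi.le_def, not_forall, not_le] at h
  obtain ⟨j, hj⟩ := h
  exact Finset.prod_eq_zero (Finset.mem_univ j) (Nat.choose_eq_zero_of_lt hj)

theorem mbinom_eq_choose_mul (k ℓ : MIdx d) (i : Fin (d+1)) :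
    mbinom k ℓ = (k i).choose (ℓ i) * ∏ j ∈ {i}ᶜ, (k j).choose (ℓ j) :=
  Fintype.prod_eq_mul_prod_compl i _

theorem mbinom_add_single (k ℓ : MIdx d) (i : Fin (d+1)) :
    mbinom (k + Pi.single i 1) ℓ =
      mbinom k ℓ + if ℓ i ≠ 0 then mbinom k (ℓ - Pi.single i 1) else 0 := by
  have prod_compl_eq (k' ℓ' : MIdx d) (hk : ∀ j ≠ i, k' j = k j) (hℓ : ∀ j ≠ i, ℓ' j = ℓ j) :
      ∏ j ∈ {i}ᶜ, (k' j).choose (ℓ' j) = ∏ j ∈ {i}ᶜ, (k j).choose (ℓ j) :=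
    Finset.prod_congr rfl fun j hj => by
      rw [hk j (by simpa using hj), hℓ j (by simpa using hj)]
  rw [mbinom_eq_choose_mul _ _ i, mbinom_eq_choose_mul k _ i, mbinom_eq_choose_mul k _ i,
    prod_compl_eq (k + Pi.single i 1) ℓ (fun j hj => by simp [hj]) fun _ _ => rfl,
    prod_compl_eq k (ℓ - Pi.single i 1) (fun _ _ => rfl) fun j hj => by simp [hj]]
  simp only [Pi.add_apply, Pi.sub_apply, Pi.single_eq_same]
  cases ℓ i with
  | zero => simp
  | succ s => simp [Nat.choose_succ_succ', add_mul, add_comm]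

theorem single_one_le_iff {i : Fin (d+1)} {ℓ : MIdx d} : Pi.single i 1 ≤ ℓ ↔ ℓ i ≠ 0 := by
  refine ⟨fun h => Nat.one_le_iff_ne_zero.mp (by simpa using h i), fun h j => ?_⟩
  rcases eq_or_ne j i with rfl | hj
  · simpa [Nat.one_le_iff_ne_zero] using h
  · simp [hj]

theorem sum_Iic_ite_ne_zero {M : Type} [AddCommMonoid M] (m : MIdx d) (i : Fin (d+1))
    (H : MIdx d → M) :
    ∑ ℓ ∈ Finset.Iic m, (if ℓ i ≠ 0 then H ℓ else 0) =
      if m i = 0 then 0 else ∑ ℓ ∈ Finset.Iic (m - Pi.single i 1), H (ℓ + Pi.single i 1) := by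
  split_ifs with hm
  · refine Finset.sum_eq_zero fun ℓ hℓ => if_neg ?_
    simpa [hm] using (Finset.mem_Iic.mp hℓ) i
  have hem : Pi.single i 1 ≤ m := single_one_le_iff.mpr hm
  rw [← Finset.sum_filter]
  refine (Finset.sum_nbij' (· + Pi.single i 1) (· - Pi.single i 1) ?_ ?_ ?_ ?_ fun _ _ => rfl).symm
  · intro ℓ hℓ
    simp only [Finset.mem_filter, Finset.mem_Iic] at hℓ ⊢
    exact ⟨(le_tsub_iff_right hem).mp hℓ, by simp⟩
  · intro ℓ hℓ
    simp only [Finset.mem_filter, Finset.mem_Iic] at hℓ ⊢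
    exact tsub_le_tsub_right hℓ.1 _
  · intro ℓ _
    exact add_tsub_cancel_right ℓ _
  · intro ℓ hℓ
    simp only [Finset.mem_filter] at hℓ
    exact tsub_add_cancel_of_le (single_one_le_iff.mpr hℓ.2)

theorem sum_Iic_inf_mbinom_smul {M : Type} [AddCommMonoid M] [Module ℝ M] (k m : MIdx d)
    (G : MIdx d → M) :
    ∑ ℓ ∈ Finset.Iic (k ⊓ m), (mbinom k ℓ : ℝ) • G ℓ =
      ∑ ℓ ∈ Finset.Iic m, (mbinom k ℓ : ℝ) • G ℓ := by
  refine Finset.sum_subset (Finset.Iic_subset_Iic.mpr inf_le_right) fun ℓ hm hkm => ?_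
  have : ¬ ℓ ≤ k := fun hk => hkm (Finset.mem_Iic.mpr (le_inf hk (Finset.mem_Iic.mp hm)))
  simp [mbinom_eq_zero_of_not_le this]

theorem sum_mbinom_smul_add_single {M : Type} [AddCommGroup M] [Module ℝ M] (k m : MIdx d)
    (i : Fin (d+1)) (F : MIdx d → MIdx d → M) :
    ∑ ℓ ∈ Finset.Iic (k ⊓ m), (mbinom k ℓ : ℝ) • F (k - ℓ + Pi.single i 1) (m - ℓ) =
      ∑ ℓ ∈ Finset.Iic ((k + Pi.single i 1) ⊓ m),
          (mbinom (k + Pi.single i 1) ℓ : ℝ) • F (k + Pi.single i 1 - ℓ) (m - ℓ) -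
        if m i = 0 then 0 else
          ∑ ℓ ∈ Finset.Iic (k ⊓ (m - Pi.single i 1)),
            (mbinom k ℓ : ℝ) • F (k - ℓ) (m - Pi.single i 1 - ℓ) := by
  have raised : ∑ ℓ ∈ Finset.Iic (k ⊓ m), (mbinom k ℓ : ℝ) • F (k - ℓ + Pi.single i 1) (m - ℓ) =
      ∑ ℓ ∈ Finset.Iic m, (mbinom k ℓ : ℝ) • F (k + Pi.single i 1 - ℓ) (m - ℓ) := by
    rw [← sum_Iic_inf_mbinom_smul k m]
    refine Finset.sum_congr rfl fun ℓ hℓ => ?_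
    rw [tsub_add_eq_add_tsub (le_inf_iff.mp (Finset.mem_Iic.mp hℓ)).1]
  have shifted : ∑ ℓ ∈ Finset.Iic m, ((if ℓ i ≠ 0 then mbinom k (ℓ - Pi.single i 1) else 0 : ℕ) : ℝ)
        • F (k + Pi.single i 1 - ℓ) (m - ℓ) =
      if m i = 0 then 0 else
        ∑ ℓ ∈ Finset.Iic (m - Pi.single i 1),
          (mbinom k ℓ : ℝ) • F (k - ℓ) (m - Pi.single i 1 - ℓ) := by
    simp only [Nat.cast_ite, Nat.cast_zero, ite_smul, zero_smul]
    rw [sum_Iic_ite_ne_zero]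
    simp only [add_tsub_cancel_right, tsub_add_eq_tsub_tsub_swap]
  rw [raised, sum_Iic_inf_mbinom_smul, sum_Iic_inf_mbinom_smul, ← shifted, eq_sub_iff_add_eq,
    ← Finset.sum_add_distrib]
  refine Finset.sum_congr rfl fun ℓ _ => ?_
  rw [mbinom_add_single, Nat.cast_add, add_smul]

end MultiIndex

section DecoratedTrees

-- Fresh variables, so that the ambient `[Zero Lm]` is not included in the lemmas below.
variable {d : ℕ} {Lp Lm : Type}

abbrev Planted (d : ℕ) (Lp Lm : Type) : Type := (Lp × MIdx d) × DT d Lp Lm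

theorem sizeOf_lt_of_mem_branches {c : Planted d Lp Lm} {cs : List (Planted d Lp Lm)}
    (h : c ∈ cs) : sizeOf c.2 < sizeOf cs := by
  have := List.sizeOf_lt_of_mem h
  obtain ⟨e, t⟩ := c
  simp only [Prod.mk.sizeOf_spec] at this ⊢
  omega

theorem DT.induction {P : DT d Lp Lm → Prop}
    (node : ∀ k l cs, (∀ c ∈ cs, P c.2) → P (.node k l cs)) : ∀ t, P t
  | .node k l cs => node k l cs fun c _ => DT.induction node c.2
termination_by t => sizeOf t
decreasing_by
  have := sizeOf_lt_of_mem_branches ‹c ∈ cs›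
  simp only [DT.node.sizeOf_spec]
  omega

noncomputable def derivList (D : DT d Lp Lm → FS d Lp Lm) :
    List (Planted d Lp Lm) → (List (Planted d Lp Lm) →₀ ℝ)
  | [] => 0
  | c :: cs => bindF (D c.2) (fun t => Finsupp.single ((c.1, t) :: cs) 1) +
      bindF (derivList D cs) (fun cs' => Finsupp.single (c :: cs') 1)

theorem upEList_eq_derivList (i : Fin (d+1)) (cs : List (Planted d Lp Lm)) :
    upEList i cs = derivList (upE i) cs := by
  induction cs with
  | nil => rw [upEList, derivList]
  | cons c cs ih => rw [upEList, derivList, ih]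

theorem graftList_eq_derivList (σ : DT d Lp Lm) (a : Lp × MIdx d)
    (cs : List (Planted d Lp Lm)) : graftList σ a cs = derivList (graftD σ a) cs := by
  induction cs with
  | nil => rw [graftList, derivList]
  | cons c cs ih => rw [graftList, derivList, ih]

theorem derivList_congr {D E : DT d Lp Lm → FS d Lp Lm} {cs : List (Planted d Lp Lm)}
    (h : ∀ c ∈ cs, D c.2 = E c.2) : derivList D cs = derivList E cs := by
  induction cs with
  | nil => rfl
  | cons c cs ih =>
    rw [derivList, derivList, h c List.mem_cons_self,
      ih fun c' hc' => h c' (List.mem_cons_of_mem c hc')]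

@[simp] theorem derivList_zero (cs : List (Planted d Lp Lm)) :
    derivList (fun _ => 0) cs = 0 := by
  induction cs with
  | nil => rfl
  | cons c cs ih => simp [derivList, ih]

theorem derivList_ite (p : Prop) [Decidable p] (D E : DT d Lp Lm → FS d Lp Lm)
    (cs : List (Planted d Lp Lm)) :
    derivList (fun t => if p then D t else E t) cs =
      if p then derivList D cs else derivList E cs := by
  split_ifs <;> rfl

theorem derivList_sub (D E : DT d Lp Lm → FS d Lp Lm) (cs : List (Planted d Lp Lm)) :
    derivList (fun t => D t - E t) cs = derivList D cs - derivList E cs := by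
  induction cs with
  | nil => simp [derivList]
  | cons c cs ih =>
    simp only [derivList, ih, bindF_sub_left]
    abel

theorem derivList_bindF {α : Type} (x : α →₀ ℝ) (D : α → DT d Lp Lm → FS d Lp Lm)
    (cs : List (Planted d Lp Lm)) :
    derivList (fun t => bindF x (fun s => D s t)) cs = bindF x (fun s => derivList (D s) cs) := by
  induction cs with
  | nil => exact (bindF_zero_right x).symm
  | cons c cs ih => simp only [derivList, ih, bindF_bindF, bindF_add_right]

theorem derivList_commutator (D E : DT d Lp Lm → FS d Lp Lm) (cs : List (Planted d Lp Lm)) :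
    bindF (derivList D cs) (derivList E) - bindF (derivList E cs) (derivList D) =
      derivList (fun t => bindF (D t) E - bindF (E t) D) cs := by
  induction cs with
  | nil => simp [derivList]
  | cons c cs ih =>
    simp only [derivList, bindF_add_left, bindF_bindF, bindF_single, one_smul, bindF_add_right]
    rw [← ih, bindF_comm (D c.2) (derivList E cs), bindF_comm (E c.2) (derivList D cs)]
    simp only [bindF_sub_left, bindF_bindF]
    abel

def sortBranches (cs : List (Planted d Lp Lm)) : List (Planted d Lp Lm) :=
  cs.mergeSort (fun a b => a ≤ b)

def nfBranch (c : Planted d Lp Lm) : Planted d Lp Lm := (c.1, c.2.nf)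

def nfBranches (cs : List (Planted d Lp Lm)) : List (Planted d Lp Lm) :=
  sortBranches (cs.map nfBranch)

theorem DT.nf_node (k : MIdx d) (l : Lm) (cs : List (Planted d Lp Lm)) :
    (DT.node k l cs).nf = .node k l (nfBranches cs) := by
  rw [DT.nf, nfBranches, sortBranches]
  exact congrArg _ (congrArg (List.mergeSort · _) (List.attach_map_val (f := nfBranch)))

theorem sortBranches_perm (cs : List (Planted d Lp Lm)) : (sortBranches cs).Perm cs :=
  List.mergeSort_perm _ _

theorem sortBranches_eq_of_perm {cs ds : List (Planted d Lp Lm)} (h : cs.Perm ds) :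
    sortBranches cs = sortBranches ds :=
  ((sortBranches_perm cs).trans (h.trans (sortBranches_perm ds).symm)).eq_of_sortedLE
    List.sortedLE_mergeSort List.sortedLE_mergeSort

theorem nfBranches_eq_of_perm {cs ds : List (Planted d Lp Lm)} (h : cs.Perm ds) :
    nfBranches cs = nfBranches ds :=
  sortBranches_eq_of_perm (h.map nfBranch)

theorem nfBranches_cons (c : Planted d Lp Lm) (cs : List (Planted d Lp Lm)) :
    nfBranches (c :: cs) = sortBranches (nfBranch c :: nfBranches cs) :=
  sortBranches_eq_of_perm (.cons _ (sortBranches_perm _).symm)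

theorem nfBranches_nfBranches_of {cs : List (Planted d Lp Lm)}
    (h : ∀ c ∈ cs, c.2.nf.nf = c.2.nf) : nfBranches (nfBranches cs) = nfBranches cs := by
  rw [nfBranches, nfBranches, sortBranches_eq_of_perm ((sortBranches_perm _).map nfBranch),
    List.map_map]
  exact congrArg _ (List.map_congr_left fun c hc => by simp [nfBranch, h c hc])

theorem DT.nf_nf (t : DT d Lp Lm) : t.nf.nf = t.nf := by
  induction t using DT.induction with
  | node k l cs ih => rw [DT.nf_node, DT.nf_node, nfBranches_nfBranches_of ih]

theorem nfBranches_nfBranches (cs : List (Planted d Lp Lm)) :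
    nfBranches (nfBranches cs) = nfBranches cs :=
  nfBranches_nfBranches_of fun c _ => c.2.nf_nf

theorem nfBranch_nfBranch (c : Planted d Lp Lm) : nfBranch (nfBranch c) = nfBranch c := by
  simp [nfBranch, DT.nf_nf]

theorem nfBranches_map_nfBranch (cs : List (Planted d Lp Lm)) :
    nfBranches (cs.map nfBranch) = nfBranches cs := by
  simp only [nfBranches, List.map_map, Function.comp_def, nfBranch_nfBranch]

theorem mapDomain_nfBranches_derivList_cons (D : DT d Lp Lm → FS d Lp Lm)
    (c : Planted d Lp Lm) (cs : List (Planted d Lp Lm)) :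
    Finsupp.mapDomain nfBranches (derivList D (c :: cs)) =
      bindF (D c.2) (fun t => Finsupp.single (nfBranches ((c.1, t) :: cs)) 1) +
      bindF (Finsupp.mapDomain nfBranches (derivList D cs))
        (fun e => Finsupp.single (sortBranches (nfBranch c :: e)) 1) := by
  simp only [derivList, mapDomain_eq_bindF, bindF_add_left, bindF_bindF, bindF_single, one_smul,
    nfBranches_cons]

theorem mapDomain_nfBranches_derivList_of_perm (D : DT d Lp Lm → FS d Lp Lm)
    {cs ds : List (Planted d Lp Lm)} (h : cs.Perm ds) :
    Finsupp.mapDomain nfBranches (derivList D cs) =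
      Finsupp.mapDomain nfBranches (derivList D ds) := by
  induction h with
  | nil => rfl
  | cons c h ih =>
    rw [mapDomain_nfBranches_derivList_cons, mapDomain_nfBranches_derivList_cons, ih]
    exact congrArg (· + _) (bindF_congr fun t => by rw [nfBranches_eq_of_perm (h.cons _)])
  | swap x y l =>
    have swap : ∀ (p q : Planted d Lp Lm) u, nfBranches (p :: q :: u) = nfBranches (q :: p :: u) :=
      fun p q u => nfBranches_eq_of_perm (.swap q p u)
    simp only [derivList, mapDomain_eq_bindF, bindF_add_left, bindF_bindF, bindF_single, one_smul,
      swap]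
    exact add_left_comm _ _ _
  | trans _ _ ih₁ ih₂ => exact ih₁.trans ih₂

theorem mapDomain_nfBranches_derivList_map_nfBranch {D : DT d Lp Lm → FS d Lp Lm}
    {cs : List (Planted d Lp Lm)} (hD : ∀ c ∈ cs, D c.2.nf = D c.2) :
    Finsupp.mapDomain nfBranches (derivList D (cs.map nfBranch)) =
      Finsupp.mapDomain nfBranches (derivList D cs) := by
  induction cs with
  | nil => rfl
  | cons c cs ih =>
    rw [List.map_cons, mapDomain_nfBranches_derivList_cons, mapDomain_nfBranches_derivList_cons,
      ih fun c' hc' => hD c' (List.mem_cons_of_mem c hc'), nfBranch_nfBranch]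
    refine congrArg (· + _) ?_
    rw [show (nfBranch c).2 = c.2.nf from rfl, hD c List.mem_cons_self]
    refine bindF_congr fun t => ?_
    rw [nfBranches_cons, nfBranches_cons, nfBranches_map_nfBranch]
    rfl

theorem bindF_derivList_nfBranches {D : DT d Lp Lm → FS d Lp Lm}
    {cs : List (Planted d Lp Lm)} (hD : ∀ c ∈ cs, D c.2.nf = D c.2) (k : MIdx d) (l : Lm) :
    bindF (derivList D (nfBranches cs)) (fun cs' => Finsupp.single (DT.node k l cs').nf (1 : ℝ)) =
      bindF (derivList D cs) (fun cs' => Finsupp.single (DT.node k l cs').nf (1 : ℝ)) := by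
  simp only [DT.nf_node]
  rw [← bindF_mapDomain nfBranches _ (fun e => Finsupp.single (DT.node k l e) (1 : ℝ)),
    ← bindF_mapDomain nfBranches _ (fun e => Finsupp.single (DT.node k l e) (1 : ℝ)), nfBranches,
    mapDomain_nfBranches_derivList_of_perm D (sortBranches_perm _),
    mapDomain_nfBranches_derivList_map_nfBranch hD]

theorem upE_nf (i : Fin (d+1)) (t : DT d Lp Lm) : upE i t.nf = upE i t := by
  induction t using DT.induction with
  | node k l cs ih =>
    rw [DT.nf_node, upE, upE, upEList_eq_derivList, upEList_eq_derivList,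
      bindF_derivList_nfBranches ih, DT.nf_node, DT.nf_node, nfBranches_nfBranches]

theorem graftD_nf (σ : DT d Lp Lm) (a : Lp × MIdx d) (t : DT d Lp Lm) :
    graftD σ a t.nf = graftD σ a t := by
  induction t using DT.induction with
  | node k l cs ih =>
    rw [DT.nf_node, graftD, graftD, graftList_eq_derivList, graftList_eq_derivList,
      bindF_derivList_nfBranches ih]
    simp only [DT.nf_node, nfBranches_cons, nfBranches_nfBranches]

theorem bindF_derivList_graftD_upE {σ : DT d Lp Lm} {a : Lp × MIdx d} {i : Fin (d+1)}
    {cs : List (Planted d Lp Lm)}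
    (ih : ∀ c ∈ cs, bindF (graftD σ a c.2) (upE i) =
      bindF (upE i σ) (fun s => graftD s a c.2) + bindF (upE i c.2) (graftD σ a) -
        if a.2 i = 0 then 0 else graftD σ (a.1, a.2 - Pi.single i 1) c.2) :
    bindF (derivList (graftD σ a) cs) (derivList (upE i)) =
      bindF (upE i σ) (fun s => derivList (graftD s a) cs) +
        bindF (derivList (upE i) cs) (derivList (graftD σ a)) -
        if a.2 i = 0 then 0 else derivList (graftD σ (a.1, a.2 - Pi.single i 1)) cs := by
  have commutator := derivList_commutator (graftD σ a) (upE i) cs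
  rw [derivList_congr (D := fun t => bindF (graftD σ a t) (upE i) - bindF (upE i t) (graftD σ a))
      (E := fun t => bindF (upE i σ) (fun s => graftD s a t) -
      if a.2 i = 0 then 0 else graftD σ (a.1, a.2 - Pi.single i 1) t) fun c hc => by
        rw [ih c hc]; abel,
    derivList_sub, derivList_bindF, derivList_ite, derivList_zero] at commutator
  rw [sub_eq_iff_eq_add'.mp commutator]
  abel

theorem upE_graftD_node (σ : DT d Lp Lm) (a : Lp × MIdx d) (i : Fin (d+1)) (k : MIdx d) (l : Lm)
    (cs : List (Planted d Lp Lm))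
    (hcs : bindF (derivList (graftD σ a) cs) (derivList (upE i)) =
      bindF (upE i σ) (fun s => derivList (graftD s a) cs) +
        bindF (derivList (upE i) cs) (derivList (graftD σ a)) -
        if a.2 i = 0 then 0 else derivList (graftD σ (a.1, a.2 - Pi.single i 1)) cs) :
    bindF (graftD σ a (.node k l cs)) (upE i) =
      bindF (upE i σ) (fun s => graftD s a (.node k l cs)) +
        bindF (upE i (.node k l cs)) (graftD σ a) -
        if a.2 i = 0 then 0 else graftD σ (a.1, a.2 - Pi.single i 1) (.node k l cs) := by
  have branches := congrArg (bindF · fun cs' => Finsupp.single (DT.node k l cs').nf (1 : ℝ)) hcs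
  have root := sum_mbinom_smul_add_single k a.2 i
    fun k' m' => Finsupp.single (DT.node k' l (((a.1, m'), σ) :: cs)).nf (1 : ℝ)
  simp only [bindF_add_left, bindF_sub_left, bindF_bindF, bindF_zero_left,
    apply_ite (bindF · fun cs' => Finsupp.single (DT.node k l cs').nf (1 : ℝ))] at branches
  simp only [graftD, upE, graftList_eq_derivList, upEList_eq_derivList, derivList, upE_nf,
    graftD_nf, bindF_add_left, bindF_add_right, bindF_bindF, bindF_sum_left, bindF_sum_right,
    bindF_smul_left, bindF_smul_right, bindF_single, one_smul, smul_add, Finset.sum_add_distrib]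
  rw [branches, root]
  split_ifs <;> abel

end DecoratedTrees

/-- non-commutation of raising and deformed grafting:
`↑^i (σ ↷̂^a τ) = (↑^i σ) ↷̂^a τ + σ ↷̂^a (↑^i τ) − σ ↷̂^{a−e_i} τ`,
the last term being zero when the `i`-th component of the edge decoration vanishes. -/
theorem upE_graftD (σ τ : DT d Lp Lm) (a : Lp × MIdx d) (i : Fin (d+1)) :
    bindF (graftD σ a τ) (fun u => upE i u) =
      bindF (upE i σ) (fun s => graftD s a τ) +
        bindF (upE i τ) (fun t => graftD σ a t) -
        (if a.2 i = 0 then 0 else graftD σ (a.1, a.2 - Pi.single i 1) τ) := by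
  induction τ using DT.induction with
  | node k l cs ih => exact upE_graftD_node σ a i k l cs (bindF_derivList_graftD_upE ih)
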